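/- Let d be an odd positive integer and λ a nonzero complex number. If f : ℤ/dℤ → ℂ satisfies (f ∗ f)(2k) = λ f(k)² for all k ∈ ℤ/dℤ, then its Fourier transform f̂ satisfies (f̂ ∗ f̂)(2k) = (d/λ) f̂(k)² for all k ∈ ℤ/dℤ; that is, the Fourier transform maps F_λ into F_{d/λ}. -/

import Mathlib

/-!
Write `𝓕` for the unnormalised transform `ZMod.dft`, so that `dft = d^{-1/2} • 𝓕`. The
convolution theorem `𝓕 (f ∗ g) = 𝓕 f · 𝓕 g` together with Fourier inversion gives its dual
`𝓕 f ∗ 𝓕 g = d • 𝓕 (f g)`. As `d` is odd, `2` is a unit of `ℤ/dℤ`, and the hypothesis reads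
`f² = λ⁻¹ • ((f ∗ f) ∘ (2 ·))`; rescaling the variable by `2` then gives
`𝓕 (f²) (2k) = λ⁻¹ 𝓕 (f ∗ f) k = λ⁻¹ (𝓕 f k)²`. Hence
`(dft f ∗ dft f) (2k) = d⁻¹ · d · 𝓕 (f²) (2k) = (d / λ) · (dft f k)²`.
-/

open Finset

/-- Convolution of two functions on `ℤ/dℤ`. -/
noncomputable def conv {d : ℕ} [NeZero d] (f g : ZMod d → ℂ) (k : ZMod d) : ℂ :=
  ∑ l : ZMod d, f l * g (k - l)

/-- Fourier transform of a function on `ℤ/dℤ`. -/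
noncomputable def dft {d : ℕ} [NeZero d] (f : ZMod d → ℂ) (k : ZMod d) : ℂ :=
  (1 / (Real.sqrt d : ℂ)) * ∑ l : ZMod d,
    Complex.exp (-2 * (Real.pi : ℂ) * Complex.I * (k.val : ℂ) * (l.val : ℂ) / d) * f l

open scoped ZMod

variable {d : ℕ} [NeZero d]

lemma conv_smul_smul (a b : ℂ) (f g : ZMod d → ℂ) :
    conv (a • f) (b • g) = (a * b) • conv f g := by
  ext k
  simp only [conv, Pi.smul_apply, smul_eq_mul, mul_sum]
  exact sum_congr rfl fun l _ => by ring

lemma dft_eq_smul_zmod_dft (f : ZMod d → ℂ) : dft f = (1 / (Real.sqrt d : ℂ)) • 𝓕 f := by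
  ext k
  simp only [dft, Pi.smul_apply, smul_eq_mul, ZMod.dft_apply]
  congr 1
  refine sum_congr rfl fun l _ => ?_
  have hlift : -(l * k) = (Int.cast (-((l.val : ℤ) * k.val)) : ZMod d) := by push_cast; simp
  rw [hlift, ZMod.stdAddChar_coe]
  congr 1
  push_cast
  ring_nf

namespace ZMod

theorem dft_conv (f g : ZMod d → ℂ) : 𝓕 (conv f g) = 𝓕 f * 𝓕 g := by
  ext k
  simp only [Pi.mul_apply, dft_apply]
  rw [Fintype.sum_mul_sum]
  simp only [conv, smul_eq_mul, mul_sum]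
  rw [sum_comm]
  refine sum_congr rfl fun l _ => Fintype.sum_equiv (Equiv.subRight l) _ _ fun j => ?_
  have hchar : stdAddChar (-(j * k)) =
      stdAddChar (-(l * k)) * stdAddChar (-((j - l) * k)) := by
    rw [← AddChar.map_add_eq_mul]; ring_nf
  rw [Equiv.subRight_apply, hchar]
  ring

/-- Applying `𝓕` to both sides, Fourier inversion `𝓕 (𝓕 φ) = d • φ ∘ neg` reduces this to
`dft_conv`. -/
theorem conv_dft (f g : ZMod d → ℂ) : conv (𝓕 f) (𝓕 g) = (d : ℂ) • 𝓕 (f * g) := by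
  apply (𝓕 : (ZMod d → ℂ) ≃ₗ[ℂ] _).injective
  rw [dft_conv, dft_dft, dft_dft, _root_.map_smul, dft_dft]
  ext j
  simp only [Pi.mul_apply, Pi.smul_apply, smul_eq_mul]
  ring

theorem dft_conv_comp_unitMul (u : (ZMod d)ˣ) (f g : ZMod d → ℂ) (k : ZMod d) :
    𝓕 (fun a => conv f g ((u : ZMod d) * a)) ((u : ZMod d) * k) = 𝓕 f k * 𝓕 g k := by
  rw [dft_comp_unitMul, Units.inv_mul_cancel_left, dft_conv, Pi.mul_apply]

end ZMod

/-- The Fourier transform sends `F_λ` into `F_{d/λ}`. -/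
theorem fourier_maps_critical (d : ℕ) [NeZero d] (hd : Odd d)
    (lam : ℂ) (hlam : lam ≠ 0) (f : ZMod d → ℂ)
    (hf : ∀ k : ZMod d, conv f f (2 * k) = lam * f k ^ 2) :
    ∀ k : ZMod d, conv (dft f) (dft f) (2 * k) = (d : ℂ) / lam * dft f k ^ 2 := by
  intro k
  set two : (ZMod d)ˣ := ZMod.unitOfCoprime 2 (Nat.coprime_two_left.mpr hd)
  have htwo : (two : ZMod d) = 2 := by simp [two]
  have hsq : f * f = lam⁻¹ • fun a => conv f f (two * a) := by
    ext a
    simp [htwo, hf, hlam, sq]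
  obtain ⟨c, hc⟩ : ∃ c : ℂ, dft f = c • 𝓕 f := ⟨_, dft_eq_smul_zmod_dft f⟩
  calc conv (dft f) (dft f) (2 * k)
      = c * c * d * 𝓕 (f * f) (2 * k) := by
        rw [hc, conv_smul_smul, ZMod.conv_dft]
        simp only [Pi.smul_apply, smul_eq_mul, mul_assoc]
    _ = c * c * d * (lam⁻¹ * 𝓕 f k ^ 2) := by
        rw [hsq, ← htwo, ZMod.dft_const_smul, Pi.smul_apply, ZMod.dft_conv_comp_unitMul,
          smul_eq_mul, sq]
    _ = (d : ℂ) / lam * dft f k ^ 2 := by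
        rw [hc, Pi.smul_apply, smul_eq_mul]
        ring
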